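/- Let {A_n} be a sequence of matrices with A_n of size d_n × d_n, d_n → ∞. If there exists p ∈ [1, ∞) such that ‖A_n‖_p / d_n^{1/p} → 0 as n → ∞ (where ‖·‖_p is the Schatten p-norm), then for every continuous compactly supported F : ℝ → ℝ, (1/d_n) ∑_{i=1}^{d_n} F(σ_i(A_n)) → F(0), i.e. the sequence is zero-distributed in the sense of singular values. -/

import Mathlib

open Matrix
open scoped ComplexOrder Classical

/-- Square root of a matrix: the unique PSD square root when `M` is positive
semidefinite, junk value `0` otherwise. -/
noncomputable def msqrt {m : Type*} [Fintype m] [DecidableEq m] (M : Matrix m m ℂ) :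
    Matrix m m ℂ :=
  if h : M.PosSemidef then
    (h.1.eigenvectorUnitary : Matrix m m ℂ) * diagonal ((↑) ∘ (√·) ∘ h.1.eigenvalues) *
      (star h.1.eigenvectorUnitary : Matrix m m ℂ)
  else 0

/-- The matrix geometric mean `G(A,B) = A^{1/2} (A^{-1/2} B A^{-1/2})^{1/2} A^{1/2}`. -/
noncomputable def matGM {m : Type*} [Fintype m] [DecidableEq m] (A B : Matrix m m ℂ) :
    Matrix m m ℂ :=
  msqrt A * msqrt ((msqrt A)⁻¹ * B * (msqrt A)⁻¹) * msqrt A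

/-- Singular values of a square complex matrix: the eigenvalues of `(MᴴM)^{1/2}`. -/
noncomputable def singVals {m : Type*} [Fintype m] [DecidableEq m] (M : Matrix m m ℂ) :
    m → ℝ :=
  if h : (msqrt (Mᴴ * M)).IsHermitian then h.eigenvalues else 0

/-- Spectral (operator) norm of a square complex matrix: the largest singular value. -/
noncomputable def specNorm {m : Type*} [Fintype m] [DecidableEq m] (M : Matrix m m ℂ) : ℝ :=
  ⨆ i, singVals M i

/-- Schatten `p`-norm: the `ℓ^p` norm of the vector of singular values. -/
noncomputable def schattenNorm {m : Type*} [Fintype m] [DecidableEq m] (p : ℝ)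
    (M : Matrix m m ℂ) : ℝ :=
  (∑ i, singVals M i ^ p) ^ (1 / p)

/-!
Since `F` is bounded and continuous at `0`, for every `ε > 0` there is `K` with
`|F x - F 0| ≤ ε + K |x|^p` for all `x`. Averaging over the singular values bounds the error
`|(1/dₙ) ∑ F(σᵢ) - F 0|` by `ε + K ‖Aₙ‖ₚ^p / dₙ`, and the second term tends to `0` by hypothesis.
-/

open Filter Topology

lemma singVals_nonneg {m : Type*} [Fintype m] [DecidableEq m] (M : Matrix m m ℂ) (i : m) :
    0 ≤ singVals M i := by
  have hsqrt : (msqrt (Mᴴ * M)).PosSemidef := by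
    rw [msqrt, dif_pos (posSemidef_conjTranspose_mul_self M)]
    exact (PosSemidef.diagonal fun _ => Complex.zero_le_real.mpr (Real.sqrt_nonneg _))
      |>.mul_mul_conjTranspose_same _
  rw [singVals, dif_pos hsqrt.isHermitian]
  exact hsqrt.eigenvalues_nonneg i

lemma schattenNorm_div_rpow_rpow {m : Type*} [Fintype m] [DecidableEq m] {p : ℝ} (hp : p ≠ 0)
    (M : Matrix m m ℂ) :
    (schattenNorm p M / (Fintype.card m : ℝ) ^ (1 / p)) ^ p =
      1 / (Fintype.card m : ℝ) * ∑ i, |singVals M i| ^ p := by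
  have hsum : 0 ≤ ∑ i, singVals M i ^ p :=
    Finset.sum_nonneg fun i _ => Real.rpow_nonneg (singVals_nonneg M i) p
  have hcard : (0 : ℝ) ≤ Fintype.card m := Nat.cast_nonneg _
  simp_rw [abs_of_nonneg (singVals_nonneg M _), schattenNorm,
    ← Real.div_rpow hsum hcard, ← Real.rpow_mul (div_nonneg hsum hcard),
    one_div_mul_cancel hp, Real.rpow_one, one_div_mul_eq_div]

lemma exists_abs_sub_le_add_mul_abs_rpow {F : ℝ → ℝ} {C p ε : ℝ} (hF : ContinuousAt F 0)
    (hC : ∀ x, |F x| ≤ C) (hp : 0 < p) (hε : 0 < ε) :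
    ∃ K, ∀ x, |F x - F 0| ≤ ε + K * |x| ^ p := by
  obtain ⟨δ, hδ, hnear⟩ := Metric.continuousAt_iff.mp hF ε hε
  have hδp : 0 < δ ^ p := Real.rpow_pos_of_pos hδ p
  have hK : 0 ≤ 2 * C / δ ^ p := div_nonneg (by linarith [abs_nonneg (F 0), hC 0]) hδp.le
  refine ⟨2 * C / δ ^ p, fun x => ?_⟩
  rcases lt_or_ge |x| δ with hx | hx
  · have hclose : |F x - F 0| < ε := by
      simpa only [Real.dist_eq, sub_zero] using hnear (x := x) (by simpa [Real.dist_eq] using hx)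
    linarith [mul_nonneg hK (Real.rpow_nonneg (abs_nonneg x) p)]
  · calc |F x - F 0| ≤ |F x| + |F 0| := abs_sub _ _
      _ ≤ 2 * C / δ ^ p * δ ^ p := by rw [div_mul_cancel₀ _ hδp.ne']; linarith [hC x, hC 0]
      _ ≤ 2 * C / δ ^ p * |x| ^ p := by gcongr
      _ ≤ ε + 2 * C / δ ^ p * |x| ^ p := le_add_of_nonneg_left hε.le

lemma abs_average_sub_le {ι : Type*} [Fintype ι] [Nonempty ι] {f g : ι → ℝ} {c ε K : ℝ}
    (h : ∀ i, |f i - c| ≤ ε + K * g i) :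
    |1 / (Fintype.card ι : ℝ) * ∑ i, f i - c| ≤ ε + K * (1 / (Fintype.card ι : ℝ) * ∑ i, g i) := by
  have hn : (0 : ℝ) < Fintype.card ι := Nat.cast_pos.mpr Fintype.card_pos
  have hcenter : 1 / (Fintype.card ι : ℝ) * ∑ i, f i - c =
      1 / (Fintype.card ι : ℝ) * ∑ i, (f i - c) := by
    rw [Finset.sum_sub_distrib, Finset.sum_const, Finset.card_univ, nsmul_eq_mul]
    field_simp
  calc |1 / (Fintype.card ι : ℝ) * ∑ i, f i - c|
      ≤ 1 / (Fintype.card ι : ℝ) * ∑ i, |f i - c| := by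
        rw [hcenter, abs_mul, abs_of_pos (one_div_pos.mpr hn)]
        gcongr
        exact Finset.abs_sum_le_sum_abs _ _
    _ ≤ 1 / (Fintype.card ι : ℝ) * ∑ i, (ε + K * g i) := by gcongr with i; exact h i
    _ = ε + K * (1 / (Fintype.card ι : ℝ) * ∑ i, g i) := by
        rw [Finset.sum_add_distrib, Finset.sum_const, Finset.card_univ, nsmul_eq_mul,
          ← Finset.mul_sum]
        field_simp

theorem tendsto_average_of_tendsto_average_abs_rpow {α : Type*} {l : Filter α} {n : α → ℕ}
    (hn : ∀ᶠ a in l, n a ≠ 0) (σ : ∀ a, Fin (n a) → ℝ) {p : ℝ} (hp : 0 < p)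
    (hσ : Tendsto (fun a => 1 / (n a : ℝ) * ∑ i, |σ a i| ^ p) l (𝓝 0))
    {F : ℝ → ℝ} {C : ℝ} (hF : ContinuousAt F 0) (hC : ∀ x, |F x| ≤ C) :
    Tendsto (fun a => 1 / (n a : ℝ) * ∑ i, F (σ a i)) l (𝓝 (F 0)) := by
  refine Metric.tendsto_nhds.mpr fun ε hε => ?_
  obtain ⟨K, hK⟩ := exists_abs_sub_le_add_mul_abs_rpow hF hC hp (half_pos hε)
  have hsmall : ∀ᶠ a in l, K * (1 / (n a : ℝ) * ∑ i, |σ a i| ^ p) < ε / 2 := by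
    have := hσ.const_mul K
    rw [mul_zero] at this
    exact this.eventually (gt_mem_nhds (half_pos hε))
  filter_upwards [hn, hsmall] with a hna hKa
  have : NeZero (n a) := ⟨hna⟩
  have hbound := abs_average_sub_le (c := F 0) fun i => hK (σ a i)
  rw [Fintype.card_fin] at hbound
  rw [Real.dist_eq]
  linarith

open Filter in
theorem stmt10 {d : ℕ → ℕ} (hd : StrictMono d)
    (A : ∀ k, Matrix (Fin (d k)) (Fin (d k)) ℂ) {p : ℝ} (hp : 1 ≤ p)
    (h : Tendsto (fun k => schattenNorm p (A k) / (d k : ℝ) ^ (1 / p)) atTop (nhds 0)) :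
    ∀ F : ℝ → ℝ, Continuous F → HasCompactSupport F →
      Tendsto (fun k => (1 / (d k : ℝ)) * ∑ i, F (singVals (A k) i)) atTop (nhds (F 0)) := by
  intro F hF hFc
  have hp0 : 0 < p := one_pos.trans_le hp
  obtain ⟨C, hC⟩ := hF.bounded_above_of_compact_support hFc
  have hmoment : Tendsto (fun k => 1 / (d k : ℝ) * ∑ i, |singVals (A k) i| ^ p) atTop (𝓝 0) := by
    have := h.rpow_const (Or.inr hp0.le)
    rw [Real.zero_rpow hp0.ne'] at this
    refine this.congr fun k => ?_
    simpa only [Fintype.card_fin] using schattenNorm_div_rpow_rpow hp0.ne' (A k)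
  exact tendsto_average_of_tendsto_average_abs_rpow (hd.tendsto_atTop.eventually_ne_atTop 0)
    (fun k => singVals (A k)) hp0 hmoment hF.continuousAt hC
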